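/- arXiv:1802.06207 — 4 statements merged into one kernel-verified Lean document; each statement's English description precedes it below -/
import Mathlib

section
/- If D is a regular language over alphabet Σ such that the sequence of counts |D ∩ Σ^n| is unbounded in n, then the sequence |D ∩ Σ^{≤n}| / n is also unbounded. -/
/-!
Let `M` be a DFA for `D` with `s` states and `q = s!`. In a word `w` with `|w| ≥ s` the run of
`M` revisits a state within its first `s` steps; the loop read between the earlier visit and the
first revisit has length dividing `q`, so inserting `q / |loop|` more copies of it gives an
accepted word of length `|w| + q`. The insertion leaves the prefix up to the first revisit
untouched, so the pumped word has the same first revisit and `w` can be read back off it.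
Hence `a n := |D ∩ Σ^n|` satisfies `a n ≤ a (n + q)` for `n ≥ s`, and so
`|D ∩ Σ^{≤ n₀ + K q}| ≥ (K + 1) a n₀` for `n₀ ≥ s`. Choosing `a n₀ > c (q + 1) + ∑_{k<s} a k`
(which forces `n₀ ≥ s`) and `K = n₀ + 1` gives the claim.
-/

open Finset
open scoped Nat

section FirstRepeat

variable {σ : Type*} [Fintype σ]

theorem exists_repeat_le_card (f : ℕ → σ) : ∃ j ≤ Fintype.card σ, ∃ i < j, f i = f j := by
  obtain ⟨a, b, hab, hf⟩ :=
    Fintype.exists_ne_map_eq_of_card_lt (fun k : Fin (Fintype.card σ + 1) => f k) (by simp)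
  rcases lt_or_gt_of_ne hab with h | h
  · exact ⟨b, Nat.lt_succ_iff.mp b.2, a, h, hf⟩
  · exact ⟨a, Nat.lt_succ_iff.mp a.2, b, h, hf.symm⟩

noncomputable def firstRepeat (f : ℕ → σ) : ℕ := sInf {j | ∃ i < j, f i = f j}

theorem exists_lt_firstRepeat_eq (f : ℕ → σ) : ∃ i < firstRepeat f, f i = f (firstRepeat f) :=
  Nat.sInf_mem ((exists_repeat_le_card f).imp fun _ h => h.2)

theorem firstRepeat_le_card (f : ℕ → σ) : firstRepeat f ≤ Fintype.card σ := by
  obtain ⟨j, hj, hrep⟩ := exists_repeat_le_card f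
  exact (Nat.sInf_le hrep).trans hj

theorem firstRepeat_congr {f g : ℕ → σ} (h : ∀ k ≤ firstRepeat f, g k = f k) :
    firstRepeat g = firstRepeat f := by
  obtain ⟨i, hi, hf⟩ := exists_lt_firstRepeat_eq f
  refine le_antisymm (Nat.sInf_le ⟨i, hi, by rw [h i hi.le, h _ le_rfl, hf]⟩) ?_
  obtain ⟨i', hi', hg⟩ := exists_lt_firstRepeat_eq g
  by_contra! hlt
  exact Nat.notMem_of_lt_sInf hlt ⟨i', hi', by rwa [← h i' (by omega), ← h _ hlt.le]⟩

noncomputable def repeatStart (f : ℕ → σ) : ℕ := (exists_lt_firstRepeat_eq f).choose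

theorem repeatStart_lt_firstRepeat (f : ℕ → σ) : repeatStart f < firstRepeat f :=
  (exists_lt_firstRepeat_eq f).choose_spec.1

theorem apply_repeatStart (f : ℕ → σ) : f (repeatStart f) = f (firstRepeat f) :=
  (exists_lt_firstRepeat_eq f).choose_spec.2

end FirstRepeat

namespace DFA

variable {α σ : Type*} [Fintype σ] (M : DFA α σ)

noncomputable def loopEnd (w : List α) : ℕ := firstRepeat fun k => M.eval (w.take k)

noncomputable def loopStart (w : List α) : ℕ := repeatStart fun k => M.eval (w.take k)

noncomputable def loop (w : List α) : List α := (w.take (M.loopEnd w)).drop (M.loopStart w)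

noncomputable def pump (q : ℕ) (w : List α) : List α :=
  w.take (M.loopEnd w) ++ (List.replicate (q / (M.loop w).length) (M.loop w)).flatten ++
    w.drop (M.loopEnd w)

theorem evalFrom_loop (w : List α) :
    M.evalFrom (M.eval (w.take (M.loopEnd w))) (M.loop w) = M.eval (w.take (M.loopEnd w)) := by
  have hij : M.loopStart w ≤ M.loopEnd w := (repeatStart_lt_firstRepeat _).le
  have hstate : M.eval (w.take (M.loopStart w)) = M.eval (w.take (M.loopEnd w)) :=
    apply_repeatStart fun k => M.eval (w.take k)
  calc M.evalFrom (M.eval (w.take (M.loopEnd w))) (M.loop w)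
      = M.evalFrom (M.eval ((w.take (M.loopEnd w)).take (M.loopStart w))) (M.loop w) := by
        rw [List.take_take, min_eq_left hij, hstate]
    _ = M.eval (w.take (M.loopEnd w)) := by
        rw [eval, ← evalFrom_of_append, loop, List.take_append_drop]

theorem eval_pump (q : ℕ) (w : List α) : M.eval (M.pump q w) = M.eval w := by
  have hloops : M.evalFrom (M.eval (w.take (M.loopEnd w)))
      (List.replicate (q / (M.loop w).length) (M.loop w)).flatten =
        M.eval (w.take (M.loopEnd w)) :=
    M.evalFrom_of_pow (M.evalFrom_loop w) (Language.join_mem_kstar fun y hy =>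
      List.eq_of_mem_replicate hy)
  conv_rhs => rw [← List.take_append_drop (M.loopEnd w) w]
  rw [pump, eval, evalFrom_of_append, evalFrom_of_append, ← eval, hloops, eval,
    evalFrom_of_append]

variable {M} {w : List α}

theorem loopEnd_le_length (hw : Fintype.card σ ≤ w.length) : M.loopEnd w ≤ w.length :=
  (firstRepeat_le_card _).trans hw

theorem length_loop_dvd_factorial (hw : Fintype.card σ ≤ w.length) :
    (M.loop w).length ∣ (Fintype.card σ)! := by
  have hij : M.loopStart w < M.loopEnd w := repeatStart_lt_firstRepeat _
  have hlen : (M.loop w).length = M.loopEnd w - M.loopStart w := by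
    simp [loop, min_eq_left (loopEnd_le_length hw)]
  rw [hlen]
  exact Nat.dvd_factorial (Nat.sub_pos_of_lt hij) ((Nat.sub_le _ _).trans (firstRepeat_le_card _))

theorem length_take_loopEnd_append_loops (hw : Fintype.card σ ≤ w.length) :
    (w.take (M.loopEnd w) ++ (List.replicate ((Fintype.card σ)! / (M.loop w).length)
      (M.loop w)).flatten).length = M.loopEnd w + (Fintype.card σ)! := by
  simp [min_eq_left (loopEnd_le_length hw), Nat.div_mul_cancel (length_loop_dvd_factorial hw)]

theorem length_pump (hw : Fintype.card σ ≤ w.length) :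
    (M.pump (Fintype.card σ)! w).length = w.length + (Fintype.card σ)! := by
  have := loopEnd_le_length hw (M := M)
  rw [pump, List.length_append, length_take_loopEnd_append_loops hw, List.length_drop]
  omega

theorem take_pump (hw : Fintype.card σ ≤ w.length) (q : ℕ) :
    (M.pump q w).take (M.loopEnd w) = w.take (M.loopEnd w) := by
  have := loopEnd_le_length hw (M := M)
  rw [pump, List.append_assoc, List.take_append_of_le_length (by simp [this])]
  simp [this]

theorem loopEnd_pump (hw : Fintype.card σ ≤ w.length) (q : ℕ) :
    M.loopEnd (M.pump q w) = M.loopEnd w :=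
  firstRepeat_congr fun k hk => by
    change k ≤ M.loopEnd w at hk
    rw [← min_eq_left hk, ← List.take_take, take_pump hw, List.take_take]

theorem take_append_drop_pump (hw : Fintype.card σ ≤ w.length) :
    (M.pump (Fintype.card σ)! w).take (M.loopEnd (M.pump (Fintype.card σ)! w)) ++
      (M.pump (Fintype.card σ)! w).drop
        (M.loopEnd (M.pump (Fintype.card σ)! w) + (Fintype.card σ)!) = w := by
  rw [loopEnd_pump hw, take_pump hw, ← length_take_loopEnd_append_loops hw, pump,
    List.drop_left, List.take_append_drop]

theorem pump_injOn :
    Set.InjOn (M.pump (Fintype.card σ)!) {w | Fintype.card σ ≤ w.length} := by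
  intro w hw v hv h
  rw [← take_append_drop_pump hw, ← take_append_drop_pump hv, h]

variable (M)

theorem ncard_accepts_length_eq_le [Finite α] {n : ℕ} (hn : Fintype.card σ ≤ n) :
    {w | w ∈ M.accepts ∧ w.length = n}.ncard ≤
      {w | w ∈ M.accepts ∧ w.length = n + (Fintype.card σ)!}.ncard := by
  refine Set.ncard_le_ncard_of_injOn (M.pump (Fintype.card σ)!) ?_
    (pump_injOn.mono fun _ hw => hn.trans_eq hw.2.symm)
    ((List.finite_length_eq α _).subset fun _ hw => hw.2)
  rintro w ⟨hacc, rfl⟩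
  exact ⟨by rwa [mem_accepts, eval_pump], length_pump hn⟩

end DFA

theorem Language.ncard_length_le_eq_sum {α : Type*} [Finite α] (L : Language α) (n : ℕ) :
    {w | w ∈ L ∧ w.length ≤ n}.ncard =
      ∑ k ∈ range (n + 1), {w | w ∈ L ∧ w.length = k}.ncard := by
  induction n with
  | zero => simp
  | succ n ih =>
    have hdisj : Disjoint {w | w ∈ L ∧ w.length ≤ n} {w | w ∈ L ∧ w.length = n + 1} :=
      Set.disjoint_left.mpr fun w hle heq => by grind
    rw [sum_range_succ, ← ih, ← Set.ncard_union_eq hdisj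
      ((List.finite_length_le α n).subset fun w hw => hw.2)
      ((List.finite_length_eq α _).subset fun w hw => hw.2)]
    congr 1
    ext w
    simp only [Set.mem_ofPred_eq, Set.mem_union]
    grind

theorem le_apply_add_mul_of_le_apply_add {a : ℕ → ℕ} {q s n : ℕ}
    (ha : ∀ n ≥ s, a n ≤ a (n + q)) (hn : s ≤ n) (k : ℕ) : a n ≤ a (n + k * q) := by
  induction k with
  | zero => simp
  | succ k ih =>
    calc a n ≤ a (n + k * q) := ih
      _ ≤ a (n + k * q + q) := ha _ (by omega)
      _ = a (n + (k + 1) * q) := by rw [add_mul, one_mul, add_assoc]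

theorem succ_mul_le_sum_range_of_le_apply_add {a : ℕ → ℕ} {q s n : ℕ} (hq : 0 < q)
    (ha : ∀ n ≥ s, a n ≤ a (n + q)) (hn : s ≤ n) (k : ℕ) :
    (k + 1) * a n ≤ ∑ m ∈ range (n + k * q + 1), a m := by
  have hinj : Set.InjOn (fun i => n + i * q) (range (k + 1)) := fun i _ j _ h => by
    simpa [hq.ne'] using h
  calc (k + 1) * a n ≤ ∑ i ∈ range (k + 1), a (n + i * q) := by
        simpa using card_nsmul_le_sum (range (k + 1)) _ _
          fun i _ => le_apply_add_mul_of_le_apply_add ha hn i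
    _ = ∑ m ∈ (range (k + 1)).image (fun i => n + i * q), a m := (sum_image hinj).symm
    _ ≤ ∑ m ∈ range (n + k * q + 1), a m := by
        refine sum_le_sum_of_subset fun m hm => ?_
        obtain ⟨i, hi, rfl⟩ := mem_image.mp hm
        have : i * q ≤ k * q := Nat.mul_le_mul_right q (by simpa [Nat.lt_succ_iff] using hi)
        simp only [mem_range]
        omega

theorem exists_mul_lt_sum_range_of_le_apply_add {a : ℕ → ℕ} {q s : ℕ} (hq : 0 < q)
    (ha : ∀ n ≥ s, a n ≤ a (n + q)) (hub : ∀ c, ∃ n, c < a n) (c : ℕ) :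
    ∃ n, 0 < n ∧ c * n < ∑ m ∈ range (n + 1), a m := by
  obtain ⟨n, hn⟩ := hub (∑ m ∈ range s, a m + c * (q + 1))
  have hsn : s ≤ n := by
    by_contra! h
    have := single_le_sum (fun m _ => Nat.zero_le (a m)) (mem_range.mpr h)
    omega
  refine ⟨n + (n + 1) * q, by positivity, ?_⟩
  calc c * (n + (n + 1) * q) ≤ (n + 2) * (c * (q + 1)) := by nlinarith
    _ < (n + 1 + 1) * a n := Nat.mul_lt_mul_of_pos_left (by omega) (by omega)
    _ ≤ _ := succ_mul_le_sum_range_of_le_apply_add hq ha hsn (n + 1)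

/-- If `D` is regular and the counts `|D ∩ Σ^n|` are unbounded in `n`, then
`|D ∩ Σ^{≤n}| / n` is also unbounded. -/
theorem cumulative_growth_unbounded {A : Type*} [Fintype A]
    (D : Language A) (hD : D.IsRegular)
    (hub : ∀ c : ℕ, ∃ n : ℕ, c < { w : List A | w ∈ D ∧ w.length = n }.ncard) :
    ∀ c : ℕ, ∃ n : ℕ, 0 < n ∧ c * n < { w : List A | w ∈ D ∧ w.length ≤ n }.ncard := by
  obtain ⟨σ, _, M, rfl⟩ := hD
  intro c
  simpa only [Language.ncard_length_le_eq_sum] using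
    exists_mul_lt_sum_range_of_le_apply_add (Nat.factorial_pos _)
      (fun n hn => M.ncard_accepts_length_eq_le hn) hub c
end

section
/- For a regular language D over a finite alphabet Σ, if there exists a constant c such that |D ∩ Σ^{≤n}| ≤ c·n + c for all n, then there exists a constant c' such that |D ∩ Σ^n| ≤ c' for all n. -/
/-!
A DFA with `k` states accepting a word `w` of length `n ≥ k` factors it as `w = a b c` with
`|a| < k` and `0 < |b| ≤ k`, so `|b|` divides `P = k!`. Pumping `b` therefore yields accepted words
of every length `n + mP`, and each of them gives back `w` once `|a|` is known. For `m = 1, …, n`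
this injects `(D ∩ Σ^n) × {1, …, n}` into `(D ∩ Σ^{≤ n + nP}) × {0, …, k - 1}`, whence
`n · |D ∩ Σ^n| ≤ k · (c (n + nP) + c)`, and dividing by `n` bounds the slice by `k c (P + 2)`.
-/

open Nat

namespace DFA

variable {α σ : Type*} [Fintype σ] (M : DFA α σ)

theorem exists_pump_dvd_factorial {w : List α} (hw : w ∈ M.accepts)
    (hlen : Fintype.card σ ≤ w.length) :
    ∃ a b c : List α, w = a ++ b ++ c ∧ a.length < Fintype.card σ ∧
      b.length ∣ (Fintype.card σ)! ∧ ∀ m, a ++ (List.replicate m b).flatten ++ c ∈ M.accepts := by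
  obtain ⟨a, b, c, rfl, hab, hb, hpump⟩ := M.pumping_lemma hw hlen
  have hbpos : 0 < b.length := List.length_pos_iff.mpr hb
  refine ⟨a, b, c, rfl, by omega, Nat.dvd_factorial hbpos (by omega), fun m => hpump ?_⟩
  exact Language.append_mem_mul (Language.append_mem_mul rfl
    (Language.join_mem_kstar fun y hy => List.eq_of_mem_replicate hy)) rfl

theorem exists_pump_length_add_mul_factorial {w : List α} (hw : w ∈ M.accepts)
    (hlen : Fintype.card σ ≤ w.length) (m : ℕ) :
    ∃ j < Fintype.card σ, ∃ u ∈ M.accepts, u.length = w.length + m * (Fintype.card σ)! ∧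
      w = u.take j ++ u.drop (j + m * (Fintype.card σ)!) := by
  obtain ⟨a, b, c, rfl, ha, ⟨q, hq⟩, hpump⟩ := M.exists_pump_dvd_factorial hw hlen
  set x := (List.replicate (m * q) b).flatten
  have hx : x.length = m * (Fintype.card σ)! := by simp [x, hq]; ring
  refine ⟨a.length, ha, a ++ x ++ (b ++ c), ?_, ?_, ?_⟩
  · simpa [x, List.replicate_succ', List.append_assoc] using hpump (m * q + 1)
  · simp [hx]; ring
  · simp [← hx]

theorem length_mul_ncard_length_eq_le [Finite α] {n : ℕ} (hn : Fintype.card σ ≤ n) :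
    n * {w | w ∈ M.accepts ∧ w.length = n}.ncard ≤
      Fintype.card σ * {w | w ∈ M.accepts ∧ w.length ≤ n + n * (Fintype.card σ)!}.ncard := by
  set k := Fintype.card σ
  set S := {w | w ∈ M.accepts ∧ w.length = n}
  set T := {w | w ∈ M.accepts ∧ w.length ≤ n + n * k !}
  have hpump (w : S) (i : Fin n) :=
    M.exists_pump_length_add_mul_factorial w.2.1 (w.2.2 ▸ hn) ((i : ℕ) + 1)
  choose j hj u hu hlen hw using hpump
  have huT (w : S) (i : Fin n) : u w i ∈ T :=
    ⟨hu w i, by rw [hlen, w.2.2]; nlinarith [i.2]⟩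
  let F : S × Fin n → T × Fin k := fun p => (⟨u p.1 p.2, huT p.1 p.2⟩, ⟨j p.1 p.2, hj p.1 p.2⟩)
  have hF : F.Injective := by
    rintro ⟨w, i⟩ ⟨w', i'⟩ h
    simp only [F, Prod.mk.injEq, Subtype.mk.injEq, Fin.mk.injEq] at h
    obtain ⟨hu', hj'⟩ := h
    obtain rfl : i = i' := by
      have hlen' := congrArg List.length hu'
      rw [hlen, hlen, w.2.2, w'.2.2] at hlen'
      have := Nat.eq_of_mul_eq_mul_right k.factorial_pos (Nat.add_left_cancel hlen')
      exact Fin.ext (by omega)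
    rw [Prod.mk.injEq, Subtype.ext_iff, hw w i, hw w' i, hu', hj']
    exact ⟨rfl, rfl⟩
  have : Finite T := ((List.finite_length_le α _).subset fun w hw => hw.2).to_subtype
  simpa [Nat.card_prod, mul_comm] using Nat.card_le_card_of_injective F hF

end DFA

/-- If `D` is regular and `|D ∩ Σ^{≤n}| ≤ c·n + c` for all `n`, then the slice sizes
`|D ∩ Σ^n|` are bounded by some constant `c'`. -/
theorem linear_cumulative_growth_bounded_slices {A : Type*} [Fintype A]
    (D : Language A) (hD : D.IsRegular) (c : ℕ)
    (hlin : ∀ n : ℕ, { w : List A | w ∈ D ∧ w.length ≤ n }.ncard ≤ c * n + c) :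
    ∃ c' : ℕ, ∀ n : ℕ, { w : List A | w ∈ D ∧ w.length = n }.ncard ≤ c' := by
  obtain ⟨σ, _, M, rfl⟩ := hD
  set k := Fintype.card σ
  have hk : 0 < k := Fintype.card_pos_iff.mpr ⟨M.start⟩
  refine ⟨k * c * (k ! + 2), fun n => ?_⟩
  rcases lt_or_ge n k with hn | hn
  · calc _ ≤ {w | w ∈ M.accepts ∧ w.length ≤ n}.ncard :=
          Set.ncard_le_ncard (fun w hw => ⟨hw.1, hw.2.le⟩)
            ((List.finite_length_le A n).subset fun w hw => hw.2)
      _ ≤ c * (n + 1) := hlin n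
      _ ≤ k * c := by rw [mul_comm k]; exact Nat.mul_le_mul_left c hn
      _ ≤ k * c * (k ! + 2) := Nat.le_mul_of_pos_right _ (by positivity)
  · refine Nat.le_of_mul_le_mul_left ?_ (show 0 < n by omega)
    calc _ ≤ k * {w | w ∈ M.accepts ∧ w.length ≤ n + n * k !}.ncard :=
          M.length_mul_ncard_length_eq_le hn
      _ ≤ k * (c * (n + n * k !) + c) := by gcongr; exact hlin _
      _ ≤ k * (c * (n + n * k !) + c * n) := by
          gcongr; exact Nat.le_mul_of_pos_right c (by omega)
      _ = n * (k * c * (k ! + 2)) := by ring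
end

section
/- Let N ⊆ v* be a context-free language over Σ, where v is a fixed nonempty word, and suppose N is infinite. Then N contains an infinite regular subset; specifically there exist m ≥ 0 and k ≥ 1 such that { v^{m} (v^{k})^{n} : n ≥ 0 } ⊆ N. -/
/-!
By the pumping lemma, a long word of `N` factors as `x a t b y` with `a ++ b ≠ []` and
`x aⁱ t bⁱ y ∈ N` for every `i`. Each of these words is a power `v ^ j i`, and comparing lengths
gives `j i * |v| = |x t y| + i * |a b|`; hence `j i = j 0 + k * i` with `k = |a b| / |v| ≥ 1`.

For the pumping lemma, let `C ≥ 1` bound the lengths of the right-hand sides of the rules. A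
derivation tree in which no nonterminal is expanded below a copy of itself, and whose expanded
nonterminals form `F`, has a yield of length at most `C ^ |F|`. Any longer word therefore has a
derivation in which some `X` derives `a X b`; choosing a derivation with the fewest rule
applications makes `a ++ b` nonempty.
-/

namespace ContextFreeGrammar

open List
open scoped Classical

variable {T : Type*} {g : ContextFreeGrammar T}

/-- `g.Parses l w n F`: a derivation forest of the word `w` from the string `l`, with `n` rule
applications, in which the expanded nonterminals form `F`. -/
inductive Parses (g : ContextFreeGrammar T) :
    List (Symbol T g.NT) → List T → ℕ → Finset g.NT → Prop
  | nil : g.Parses [] [] 0 ∅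
  | terminal (t : T) {l : List (Symbol T g.NT)} {w : List T} {n : ℕ} {F : Finset g.NT} :
      g.Parses l w n F → g.Parses (.terminal t :: l) (t :: w) n F
  | nonterminal {r : ContextFreeRule T g.NT} (hr : r ∈ g.rules) {u : List T} {m : ℕ}
      {E : Finset g.NT} {l : List (Symbol T g.NT)} {w : List T} {n : ℕ} {F : Finset g.NT} :
      g.Parses r.output u m E → g.Parses l w n F →
      g.Parses (.nonterminal r.input :: l) (u ++ w) (m + 1 + n) (insert r.input E ∪ F)

namespace Parses

variable {l l₁ l₂ : List (Symbol T g.NT)} {w w₁ w₂ : List T} {n n₁ n₂ : ℕ}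
  {F F₁ F₂ : Finset g.NT}

theorem append (h₁ : g.Parses l₁ w₁ n₁ F₁) (h₂ : g.Parses l₂ w₂ n₂ F₂) :
    g.Parses (l₁ ++ l₂) (w₁ ++ w₂) (n₁ + n₂) (F₁ ∪ F₂) := by
  induction h₁ with
  | nil => simpa using h₂
  | terminal t _ ih => exact ih.terminal t
  | nonterminal hr hu _ _ ih =>
    simpa [add_assoc, Finset.union_assoc] using nonterminal hr hu ih

theorem singleton_nonterminal {r : ContextFreeRule T g.NT} (hr : r ∈ g.rules)
    (h : g.Parses r.output w n F) :
    g.Parses [.nonterminal r.input] w (n + 1) (insert r.input F) := by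
  simpa using nonterminal hr h nil

theorem exists_of_append (h : g.Parses (l₁ ++ l₂) w n F) :
    ∃ w₁ w₂, w = w₁ ++ w₂ ∧ (∃ n₁ F₁, g.Parses l₁ w₁ n₁ F₁) ∧ ∃ n₂ F₂, g.Parses l₂ w₂ n₂ F₂ := by
  induction l₁ generalizing w n F with
  | nil => exact ⟨[], w, rfl, ⟨0, ∅, nil⟩, n, F, h⟩
  | cons s l₁ ih =>
    cases h with
    | terminal t h =>
      obtain ⟨w₁, w₂, rfl, ⟨n₁, F₁, h₁⟩, h₂⟩ := ih h
      exact ⟨t :: w₁, w₂, rfl, ⟨n₁, F₁, h₁.terminal t⟩, h₂⟩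
    | nonterminal hr hu h =>
      obtain ⟨w₁, w₂, rfl, ⟨n₁, F₁, h₁⟩, h₂⟩ := ih h
      exact ⟨_ ++ w₁, w₂, (append_assoc ..).symm, ⟨_, _, nonterminal hr hu h₁⟩, h₂⟩

theorem derives (h : g.Parses l w n F) : g.Derives l (w.map .terminal) := by
  induction h with
  | nil => rfl
  | terminal t _ ih => exact ih.append_left [.terminal t]
  | @nonterminal r hr u _ _ l w _ _ _ _ ihu ihl =>
    have hstep : g.Produces ([.nonterminal r.input] ++ l) (r.output ++ l) :=
      ⟨r, hr, ContextFreeRule.Rewrites.input_output.append_right l⟩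
    rw [map_append]
    exact hstep.trans_derives ((ihu.append_right l).trans (ihl.append_left _))

theorem subset_image_input (h : g.Parses l w n F) : F ⊆ g.rules.image ContextFreeRule.input := by
  induction h with
  | nil => exact Finset.empty_subset _
  | terminal _ _ ih => exact ih
  | nonterminal hr _ _ ihu ihl =>
    exact Finset.union_subset (Finset.insert_subset (Finset.mem_image_of_mem _ hr) ihu) ihl

end Parses

theorem parses_map_terminal (w : List T) : g.Parses (w.map .terminal) w 0 ∅ := by
  induction w with
  | nil => exact .nil
  | cons t w ih => exact ih.terminal t

theorem Derives.exists_parses {l : List (Symbol T g.NT)} {w : List T}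
    (h : g.Derives l (w.map .terminal)) : ∃ n F, g.Parses l w n F := by
  induction h using Relation.ReflTransGen.head_induction_on with
  | refl => exact ⟨0, ∅, parses_map_terminal w⟩
  | head hp _ ih =>
    obtain ⟨n, F, h⟩ := ih
    obtain ⟨r, hr, hrw⟩ := hp
    obtain ⟨p, q, rfl, rfl⟩ := hrw.exists_parts
    obtain ⟨wp, w', rfl, ⟨np, Fp, hp⟩, n', F', h'⟩ :=
      Parses.exists_of_append (l₂ := r.output ++ q) (by simpa using h)
    obtain ⟨u, wq, rfl, ⟨nu, Fu, hu⟩, nq, Fq, hq⟩ := Parses.exists_of_append h'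
    exact ⟨_, _, by simpa using hp.append (.nonterminal hr hu hq)⟩

theorem mem_language_iff_exists_parses (w : List T) :
    w ∈ g.language ↔ ∃ n F, g.Parses [.nonterminal g.initial] w n F :=
  ⟨Derives.exists_parses, fun ⟨_, _, h⟩ => h.derives⟩

def IsContext (g : ContextFreeGrammar T) (l : List (Symbol T g.NT)) (X : g.NT) (α ω : List T)
    (k : ℕ) : Prop :=
  ∀ ⦃u m E⦄, g.Parses [.nonterminal X] u m E → ∃ F, g.Parses l (α ++ u ++ ω) (k + m) F

namespace IsContext

variable {l l₁ l₂ : List (Symbol T g.NT)} {X Y : g.NT} {α ω a b w : List T} {k j n : ℕ}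
  {F : Finset g.NT}

theorem self (X : g.NT) : g.IsContext [.nonterminal X] X [] [] 0 :=
  fun _ m E h => ⟨E, by simpa using h⟩

theorem append_left (h : g.Parses l₁ w n F) (hc : g.IsContext l₂ X α ω k) :
    g.IsContext (l₁ ++ l₂) X (w ++ α) ω (n + k) := fun _ _ _ hu =>
  let ⟨_, h'⟩ := hc hu
  ⟨_, by simpa [add_assoc] using h.append h'⟩

theorem append_right (hc : g.IsContext l₁ X α ω k) (h : g.Parses l₂ w n F) :
    g.IsContext (l₁ ++ l₂) X α (ω ++ w) (k + n) := fun _ _ _ hu =>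
  let ⟨_, h'⟩ := hc hu
  ⟨_, by simpa [add_right_comm] using h'.append h⟩

theorem nonterminal {r : ContextFreeRule T g.NT} (hr : r ∈ g.rules)
    (hc : g.IsContext r.output X α ω k) : g.IsContext [.nonterminal r.input] X α ω (k + 1) :=
  fun _ _ _ hu =>
  let ⟨_, h'⟩ := hc hu
  ⟨_, by simpa [add_right_comm] using Parses.singleton_nonterminal hr h'⟩

theorem trans (hc : g.IsContext l X α ω k) (hc' : g.IsContext [.nonterminal X] Y a b j) :
    g.IsContext l Y (α ++ a) (b ++ ω) (k + j) := fun _ _ _ hu =>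
  let ⟨_, h'⟩ := hc' hu
  let ⟨F, h''⟩ := hc h'
  ⟨F, by simpa [add_assoc] using h''⟩

theorem pow (hc : g.IsContext [.nonterminal X] X a b j) (i : ℕ) :
    g.IsContext [.nonterminal X] X (replicate i a).flatten (replicate i b).flatten (j * i) := by
  induction i with
  | zero => simpa using self X
  | succ i ih =>
    rw [replicate_succ', replicate_succ]
    simpa [mul_add] using ih.trans hc

end IsContext

def IsPumpable (g : ContextFreeGrammar T) (l : List (Symbol T g.NT)) (w : List T) (n : ℕ) :
    Prop :=
  ∃ (X : g.NT) (α a t b ω : List T) (k j m : ℕ) (E : Finset g.NT),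
    w = α ++ a ++ t ++ b ++ ω ∧ k + (j + 1) + m ≤ n ∧ g.Parses [.nonterminal X] t m E ∧
      g.IsContext [.nonterminal X] X a b (j + 1) ∧ g.IsContext l X α ω k

namespace IsPumpable

variable {l l₁ l₂ : List (Symbol T g.NT)} {w w₁ w₂ : List T} {n n₁ n₂ : ℕ} {F : Finset g.NT}

theorem append_left (h : g.Parses l₁ w₁ n₁ F) (hp : g.IsPumpable l₂ w₂ n₂) :
    g.IsPumpable (l₁ ++ l₂) (w₁ ++ w₂) (n₁ + n₂) := by
  obtain ⟨X, α, a, t, b, ω, k, j, m, E, rfl, hle, ht, hin, hout⟩ := hp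
  exact ⟨X, w₁ ++ α, a, t, b, ω, n₁ + k, j, m, E, by simp, by omega, ht, hin,
    hout.append_left h⟩

theorem append_right (hp : g.IsPumpable l₁ w₁ n₁) (h : g.Parses l₂ w₂ n₂ F) :
    g.IsPumpable (l₁ ++ l₂) (w₁ ++ w₂) (n₁ + n₂) := by
  obtain ⟨X, α, a, t, b, ω, k, j, m, E, rfl, hle, ht, hin, hout⟩ := hp
  exact ⟨X, α, a, t, b, ω ++ w₂, k + n₂, j, m, E, by simp, by omega, ht, hin,
    hout.append_right h⟩

theorem nonterminal {r : ContextFreeRule T g.NT} (hr : r ∈ g.rules)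
    (hp : g.IsPumpable r.output w n) : g.IsPumpable [.nonterminal r.input] w (n + 1) := by
  obtain ⟨X, α, a, t, b, ω, k, j, m, E, rfl, hle, ht, hin, hout⟩ := hp
  exact ⟨X, α, a, t, b, ω, k + 1, j, m, E, rfl, by omega, ht, hin, hout.nonterminal hr⟩

end IsPumpable

namespace Parses

variable {l : List (Symbol T g.NT)} {w : List T} {n : ℕ} {F : Finset g.NT}

theorem exists_isContext (h : g.Parses l w n F) {X : g.NT} (hX : X ∈ F) :
    ∃ (α t ω : List T) (k m : ℕ) (E : Finset g.NT), w = α ++ t ++ ω ∧ k + m ≤ n ∧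
      g.Parses [.nonterminal X] t m E ∧ g.IsContext l X α ω k := by
  induction h with
  | nil => simp at hX
  | terminal t _ ih =>
    obtain ⟨α, t', ω, k, m, E, rfl, hle, ht, hc⟩ := ih hX
    exact ⟨t :: α, t', ω, k, m, E, rfl, hle, ht,
      by simpa using IsContext.append_left (terminal t nil) hc⟩
  | @nonterminal r hr u m E l w n F hu hl ihu ihl =>
    rcases Finset.mem_union.mp hX with hX | hX
    · rcases Finset.mem_insert.mp hX with rfl | hX
      · exact ⟨[], u, w, n, m + 1, insert r.input E, by simp, by omega,
          singleton_nonterminal hr hu, by simpa using (IsContext.self r.input).append_right hl⟩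
      · obtain ⟨α, t, ω, k, m', E', rfl, hle, ht, hc⟩ := ihu hX
        exact ⟨α, t, ω ++ w, k + 1 + n, m', E', by simp, by omega, ht,
          (hc.nonterminal hr).append_right hl⟩
    · obtain ⟨α, t, ω, k, m', E', rfl, hle, ht, hc⟩ := ihl hX
      exact ⟨u ++ α, t, ω, m + 1 + k, m', E', by simp, by omega, ht,
        IsContext.append_left (singleton_nonterminal hr hu) hc⟩

theorem length_le_or_isPumpable {C : ℕ} (hC₀ : 0 < C)
    (hC : ∀ r ∈ g.rules, r.output.length ≤ C) (h : g.Parses l w n F) :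
    w.length ≤ l.length * C ^ F.card ∨ g.IsPumpable l w n := by
  induction h with
  | nil => simp
  | @terminal t l w n F _ ih =>
    rcases ih with hb | hp
    · have : 1 ≤ C ^ F.card := Nat.one_le_pow _ _ hC₀
      left
      simp only [length_cons, add_one_mul]
      omega
    · right
      simpa using IsPumpable.append_left (terminal t nil) hp
  | @nonterminal r hr u m E l w n F hu hl ihu ihl =>
    have hhead : u.length ≤ C ^ (insert r.input E).card ∨
        g.IsPumpable [.nonterminal r.input] u (m + 1) := by
      by_cases hX : r.input ∈ E
      · obtain ⟨a, t, b, j, m', E', rfl, hle, ht, hc⟩ := hu.exists_isContext hX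
        exact .inr ⟨r.input, [], a, t, b, [], 0, j, m', E', by simp, by omega, ht,
          hc.nonterminal hr, IsContext.self r.input⟩
      · refine ihu.imp (fun hb => ?_) (IsPumpable.nonterminal hr)
        rw [Finset.card_insert_of_notMem hX, pow_succ']
        exact hb.trans (Nat.mul_le_mul_right _ (hC r hr))
    have hmono {G : Finset g.NT} (hG : G ⊆ insert r.input E ∪ F) :
        C ^ G.card ≤ C ^ (insert r.input E ∪ F).card :=
      Nat.pow_le_pow_right hC₀ (Finset.card_le_card hG)
    rcases hhead with hb | hp
    · rcases ihl with hb' | hp'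
      · have h₁ := hb.trans (hmono Finset.subset_union_left)
        have h₂ := hb'.trans (Nat.mul_le_mul_left l.length (hmono Finset.subset_union_right))
        left
        simp only [length_append, length_cons, add_one_mul]
        omega
      · exact .inr (IsPumpable.append_left (singleton_nonterminal hr hu) hp')
    · exact .inr (hp.append_right hl)

end Parses

theorem exists_pumping (g : ContextFreeGrammar T) :
    ∃ p, ∀ w ∈ g.language, p < w.length → ∃ x a t b y : List T,
      w = x ++ a ++ t ++ b ++ y ∧ a ++ b ≠ [] ∧
        ∀ i, x ++ (replicate i a).flatten ++ t ++ (replicate i b).flatten ++ y ∈ g.language := by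
  obtain ⟨C, hC₀, hC⟩ : ∃ C, 0 < C ∧ ∀ r ∈ g.rules, r.output.length ≤ C :=
    ⟨_, Nat.succ_pos _, fun r hr => Nat.le_succ_of_le (Finset.le_sup (f := (·.output.length)) hr)⟩
  refine ⟨C ^ (g.rules.image ContextFreeRule.input).card, fun w hw hlen => ?_⟩
  rw [mem_language_iff_exists_parses] at hw
  obtain ⟨F, hF⟩ := Nat.find_spec hw
  rcases hF.length_le_or_isPumpable hC₀ hC with
    hb | ⟨X, x, a, t, b, y, k, j, m, E, rfl, hle, ht, hin, hout⟩
  · have := Nat.pow_le_pow_right hC₀ (Finset.card_le_card hF.subset_image_input)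
    simp only [length_singleton, one_mul] at hb
    omega
  refine ⟨x, a, t, b, y, rfl, fun hab => ?_, fun i => ?_⟩
  · obtain ⟨rfl, rfl⟩ := append_eq_nil_iff.mp hab
    obtain ⟨F', h'⟩ := hout ht
    exact Nat.find_min hw (by omega : k + m < Nat.find hw) ⟨F', by simpa using h'⟩
  · obtain ⟨F', h'⟩ := hout.trans (hin.pow i) ht
    exact (mem_language_iff_exists_parses _).mpr ⟨_, F', by simpa using h'⟩

end ContextFreeGrammar

theorem Language.IsContextFree.exists_pumping {T : Type*} {L : Language T}
    (hL : L.IsContextFree) :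
    ∃ p, ∀ w ∈ L, p < w.length → ∃ x a t b y : List T,
      w = x ++ a ++ t ++ b ++ y ∧ a ++ b ≠ [] ∧
        ∀ i, x ++ (List.replicate i a).flatten ++ t ++ (List.replicate i b).flatten ++ y ∈ L := by
  obtain ⟨g, rfl⟩ := hL
  exact g.exists_pumping

theorem List.length_flatten_replicate {α : Type*} (i : ℕ) (v : List α) :
    (replicate i v).flatten.length = i * v.length := by
  simp

theorem exists_length_gt_of_subset_powers {A : Type*} {v : List A} (hv : v ≠ [])
    {N : Set (List A)} (hNv : ∀ w ∈ N, ∃ j, w = (List.replicate j v).flatten) (hN : N.Infinite)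
    (p : ℕ) : ∃ w ∈ N, p < w.length := by
  by_contra! h
  refine hN (((Set.finite_Iic p).image fun j => (List.replicate j v).flatten).subset
    fun w hw => ?_)
  obtain ⟨j, rfl⟩ := hNv w hw
  have hlen := h _ hw
  rw [List.length_flatten_replicate] at hlen
  exact ⟨j, (Nat.le_mul_of_pos_right j (List.length_pos_iff.mpr hv)).trans hlen, rfl⟩

theorem exists_eq_add_mul_of_mul_eq_add_mul {j : ℕ → ℕ} {L c d : ℕ} (hL : 0 < L)
    (h : ∀ i, j i * L = c + i * d) : ∃ k, d = k * L ∧ ∀ i, j i = j 0 + k * i := by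
  have h₀ : j 0 * L = c := by simpa using h 0
  have h₁ : j 1 * L = c + d := by simpa using h 1
  have hle : j 0 ≤ j 1 := Nat.le_of_mul_le_mul_right (by omega) hL
  obtain ⟨k, hd⟩ : ∃ k, d = k * L := ⟨j 1 - j 0, by rw [Nat.sub_mul]; omega⟩
  refine ⟨k, hd, fun i => Nat.eq_of_mul_eq_mul_right hL ?_⟩
  rw [h i, hd, ← h₀]
  ring

theorem cf_subset_of_powers_contains_arithmetic_progression_general {A : Type*}
    (v : List A) (hv : v ≠ [])
    (N : Language A) (hN : N.IsContextFree)
    (hNv : ∀ w ∈ N, ∃ j : ℕ, w = (List.replicate j v).flatten)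
    (hNinf : Set.Infinite (N : Set (List A))) :
    ∃ m k : ℕ, 1 ≤ k ∧ ∀ n : ℕ, (List.replicate (m + k * n) v).flatten ∈ N := by
  obtain ⟨p, hp⟩ := hN.exists_pumping
  obtain ⟨w, hw, hlen⟩ := exists_length_gt_of_subset_powers hv hNv hNinf p
  obtain ⟨x, a, t, b, y, rfl, hab, hpump⟩ := hp w hw hlen
  choose j hj using fun i => hNv _ (hpump i)
  have hj_length (i : ℕ) : j i * v.length = (x ++ t ++ y).length + i * (a ++ b).length := by
    have := congrArg List.length (hj i)
    simp only [List.length_append, List.length_flatten_replicate] at this ⊢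
    rw [← this]
    ring
  obtain ⟨k, hk, hj_eq⟩ :=
    exists_eq_add_mul_of_mul_eq_add_mul (List.length_pos_iff.mpr hv) hj_length
  refine ⟨j 0, k, Nat.pos_of_ne_zero ?_, fun n => ?_⟩
  · rintro rfl
    exact hab (List.eq_nil_of_length_eq_zero (by simpa using hk))
  · rw [← hj_eq n, ← hj n]
    exact hpump n

/-- If `N ⊆ v*` is an infinite context-free language (with `v` nonempty), then there exist
`m ≥ 0` and `k ≥ 1` with `{ v^m (v^k)^n : n ≥ 0 } ⊆ N`. -/
theorem cf_subset_of_powers_contains_arithmetic_progression {A : Type*} [Fintype A]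
    (v : List A) (hv : v ≠ [])
    (N : Language A) (hN : N.IsContextFree)
    (hNv : ∀ w ∈ N, ∃ j : ℕ, w = (List.replicate j v).flatten)
    (hNinf : Set.Infinite (N : Set (List A))) :
    ∃ m k : ℕ, 1 ≤ k ∧ ∀ n : ℕ, (List.replicate (m + k * n) v).flatten ∈ N :=
  cf_subset_of_powers_contains_arithmetic_progression_general v hv N hN hNv hNinf
end

section
/- Let D ⊆ Σ* be regular, x ∈ Σ* with |x| ≥ p (the pumping constant of D) such that x has at least one extension in D. Write x = u v w with |v| ≥ 1 such that x and u v^r w are right-syntactically equivalent for all r ≥ 0 (i.e., for all y, x·y ∈ D ⟺ u v^r w·y ∈ D). Then for any finite set S of suffixes with x·s ∈ D for all s ∈ S, the words u v^r w s for 0 ≤ r ≤ n, s ∈ S are pairwise distinct elements of D, so |D ∩ Σ^{≤ |x| + n|v| + max_{s∈S}|s|}| ≥ (n+1)·|S|. -/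
namespace List

variable {α : Type*}

def pump (u v w : List α) (r : ℕ) : List α :=
  u ++ (replicate r v).flatten ++ w

theorem length_pump (u v w : List α) (r : ℕ) :
    (pump u v w r).length = u.length + r * v.length + w.length := by
  simp only [pump, length_append, length_flatten, map_replicate, sum_replicate, smul_eq_mul]

theorem pump_append_inj {u v w s s' : List α} {r r' : ℕ} (hv : v ≠ [])
    (hs : s.length = s'.length) (h : pump u v w r ++ s = pump u v w r' ++ s') :
    r = r' ∧ s = s' := by
  have hlen := congrArg length h
  simp only [length_append, length_pump, hs] at hlen
  have hr : r = r' :=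
    Nat.eq_of_mul_eq_mul_right (length_pos_iff.mpr hv) (by omega)
  subst hr
  exact ⟨rfl, append_cancel_left h⟩

end List

open List

theorem pumped_words_count_lower_bound_general {A : Type*} [Fintype A]
    (D : Language A)
    (x u v w : List A) (hx : x = u ++ v ++ w) (hv : 1 ≤ v.length)
    (hsyn : ∀ (r : ℕ) (y : List A),
      (x ++ y ∈ D ↔ u ++ (List.replicate r v).flatten ++ w ++ y ∈ D))
    (S : Finset (List A)) (ℓ : ℕ) (hlen : ∀ s ∈ S, s.length = ℓ)
    (hmem : ∀ s ∈ S, x ++ s ∈ D) (n : ℕ) :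
    (n + 1) * S.card ≤
      { z : List A | z ∈ D ∧ z.length ≤ x.length + n * v.length + ℓ }.ncard := by
  have hv_ne : v ≠ [] := ne_nil_of_length_pos hv
  rw [← Finset.card_range (n + 1), ← Finset.card_product, ← Set.ncard_coe_finset]
  refine Set.ncard_le_ncard_of_injOn (fun p => pump u v w p.1 ++ p.2) ?_ ?_
    ((finite_length_le A _).subset fun _ hz => hz.2)
  · rintro ⟨r, s⟩ hrs
    simp only [Finset.coe_product, Set.mem_prod, Finset.coe_range, Set.mem_Iio,
      Finset.mem_coe] at hrs
    refine ⟨(hsyn r s).mp (hmem s hrs.2), ?_⟩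
    have hrn : r * v.length ≤ n * v.length := Nat.mul_le_mul_right _ (by omega)
    calc (pump u v w r ++ s).length = u.length + r * v.length + w.length + ℓ := by
          rw [length_append, length_pump, hlen s hrs.2]
      _ ≤ x.length + n * v.length + ℓ := by
          rw [hx, length_append, length_append]
          omega
  · rintro ⟨r, s⟩ hrs ⟨r', s'⟩ hrs' h
    simp only [Finset.coe_product, Set.mem_prod, Finset.mem_coe] at hrs hrs'
    obtain ⟨rfl, rfl⟩ :=
      pump_append_inj hv_ne ((hlen s hrs.2).trans (hlen s' hrs'.2).symm) h
    rfl

/-- If `x = u v w` with `v` nonempty and `x` right-syntactically equivalent to `u v^r w`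
for all `r` (with respect to `D`), then, for a finite set `S` of suffixes of a common
length `ℓ` with `x·s ∈ D` for all `s ∈ S`, the words `u v^r w s` (`0 ≤ r ≤ n`, `s ∈ S`)
are pairwise distinct elements of `D`, so
`|D ∩ Σ^{≤ |x| + n|v| + ℓ}| ≥ (n+1)·|S|`. -/
theorem pumped_words_count_lower_bound {A : Type*} [Fintype A]
    (D : Language A) (hD : D.IsRegular)
    (x u v w : List A) (hx : x = u ++ v ++ w) (hv : 1 ≤ v.length)
    (hsyn : ∀ (r : ℕ) (y : List A),
      (x ++ y ∈ D ↔ u ++ (List.replicate r v).flatten ++ w ++ y ∈ D))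
    (S : Finset (List A)) (ℓ : ℕ) (hlen : ∀ s ∈ S, s.length = ℓ)
    (hmem : ∀ s ∈ S, x ++ s ∈ D) (n : ℕ) :
    (n + 1) * S.card ≤
      { z : List A | z ∈ D ∧ z.length ≤ x.length + n * v.length + ℓ }.ncard :=
  pumped_words_count_lower_bound_general D x u v w hx hv hsyn S ℓ hlen hmem n
end
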